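/- arXiv:1701.07115 — 2 statements merged into one kernel-verified Lean document; each statement's English description precedes it below -/
import Mathlib

section
/- Let K, N be positive integers, 𝔽 a field, G a simple graph on Fin K, M an induced matching of G, and {p, q} an edge of M. Fix a demand d : Fin K → Fin N. If two file libraries x, x' : Fin N → Fin K → 𝔽 satisfy T_M(x, d) = T_M(x', d) and x g j = x' g j for every file g ∈ Fin N and every packet index j ∈ Fin K not adjacent to p in G, then x (d p) q = x' (d p) q. (That is, from the single XOR broadcast formed from the induced matching M, user p recovers its demanded packet indexed by its matched partner q using only its cached packets.) -/
/-- `M` is an induced matching of the simple graph `G`, where each edge of the matching is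
recorded as an ordered pair. The cross-adjacency condition simultaneously forces the edges
to be pairwise vertex-disjoint and the matching to be induced. -/
def IsInducedMatching {V : Type*} (G : SimpleGraph V) (M : Finset (V × V)) : Prop :=
  (∀ e ∈ M, G.Adj e.1 e.2) ∧
  ∀ e ∈ M, ∀ f ∈ M, e ≠ f →
    ¬ G.Adj e.1 f.1 ∧ ¬ G.Adj e.1 f.2 ∧ ¬ G.Adj e.2 f.1 ∧ ¬ G.Adj e.2 f.2

/-- The broadcast (XOR) associated with a matching `M`, a demand `d` and a library `x`:
`T_M(x, d) = Σ_{{a,b} ∈ M} ( x (d a) b + x (d b) a )`. -/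
def broadcast {V : Type*} {N : ℕ} {𝔽 : Type*} [AddCommMonoid 𝔽]
    (M : Finset (V × V)) (d : V → Fin N) (x : Fin N → V → 𝔽) : 𝔽 :=
  ∑ e ∈ M, (x (d e.1) e.2 + x (d e.2) e.1)

/-- From the single broadcast formed from an induced matching `M` containing the edge `{p, q}`,
user `p` recovers its demanded packet indexed by its matched partner `q`, using only the packets
it cached under the Ruzsa–Szemerédi placement (packet `j` of every file is cached at user `p`
iff `j` is not adjacent to `p`). -/
theorem user_recovers_packet_from_induced_matching_broadcast
    {K N : ℕ} (hK : 0 < K) (hN : 0 < N)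
    {𝔽 : Type*} [Field 𝔽]
    (G : SimpleGraph (Fin K)) (M : Finset (Fin K × Fin K))
    (hind : IsInducedMatching G M)
    (p q : Fin K) (hpq : (p, q) ∈ M ∨ (q, p) ∈ M)
    (d : Fin K → Fin N)
    (x x' : Fin N → Fin K → 𝔽)
    (hT : broadcast M d x = broadcast M d x')
    (hcache : ∀ (g : Fin N) (j : Fin K), ¬ G.Adj p j → x g j = x' g j) :
    x (d p) q = x' (d p) q := by
  have hpp : ¬ G.Adj p p := G.irrefl
  rcases hpq with h | h
  · have hsum : ∀ e ∈ M.erase (p, q),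
        x (d e.1) e.2 + x (d e.2) e.1 = x' (d e.1) e.2 + x' (d e.2) e.1 := by
      intro e he
      have hne : e ≠ (p, q) := Finset.ne_of_mem_erase he
      have heM := Finset.mem_of_mem_erase he
      obtain ⟨h1, h2, -, -⟩ := hind.2 (p, q) h e heM (fun h' => hne h'.symm)
      rw [hcache _ _ h2, hcache _ _ h1]
    rw [broadcast, broadcast, ← Finset.add_sum_erase _ _ h,
        ← Finset.add_sum_erase _ _ h, Finset.sum_congr rfl hsum] at hT
    have h3 := add_right_cancel hT
    rw [hcache (d q) p hpp] at h3
    exact add_right_cancel h3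
  · have hsum : ∀ e ∈ M.erase (q, p),
        x (d e.1) e.2 + x (d e.2) e.1 = x' (d e.1) e.2 + x' (d e.2) e.1 := by
      intro e he
      have hne : e ≠ (q, p) := Finset.ne_of_mem_erase he
      have heM := Finset.mem_of_mem_erase he
      obtain ⟨-, -, h1, h2⟩ := hind.2 (q, p) h e heM (fun h' => hne h'.symm)
      rw [hcache _ _ h2, hcache _ _ h1]
    rw [broadcast, broadcast, ← Finset.add_sum_erase _ _ h,
        ← Finset.add_sum_erase _ _ h, Finset.sum_congr rfl hsum] at hT
    have h3 := add_right_cancel hT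
    rw [hcache (d q) p hpp] at h3
    exact add_left_cancel h3
end

section
/- For every real ε > 0 and every integer C ≥ 2 there exists n₀ such that for every even integer n with n ≥ max(2C, n₀), setting K = C^n, the graph G_{C,n} satisfies: (а) its edge set can be partitioned into at most K^{1 + 2·ln(10.5)/ln C + ε} pairwise edge-disjoint induced matchings, and (b) the number of unordered pairs of distinct vertices that are NOT adjacent in G_{C,n} is at most K^{2 − 1/(2C⁴·ln C) + ε}. (Hence G_{C,n} is an (r, t)-Ruzsa–Szemerédi graph with t ≤ K^{1 + 2·ln(10.5)/ln C + ε} and average matching size r = |E|/t, missing at most K^{2 − 1/(2C⁴·ln C) + ε} edges.) -/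
/-- The Alon–Moitra–Sudakov graph `G_{C,n}` on the vertex set `{0, …, C-1}^n`:
two distinct vertices `u, v` are adjacent iff `| ‖u - v‖² - μ | < n`, where
`‖u - v‖² = Σ_i (u_i - v_i)²` and `μ = n (C² - 1) / 6`. -/
def amsGraph (C n : ℕ) : SimpleGraph (Fin n → Fin C) where
  Adj u v := u ≠ v ∧
    |(∑ i, ((u i : ℝ) - (v i : ℝ)) ^ 2) - (n : ℝ) * ((C : ℝ) ^ 2 - 1) / 6| < (n : ℝ)
  symm := by
    constructor
    intro u v h
    refine ⟨h.1.symm, ?_⟩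
    have hsum : ∑ i, ((v i : ℝ) - (u i : ℝ)) ^ 2 = ∑ i, ((u i : ℝ) - (v i : ℝ)) ^ 2 :=
      Finset.sum_congr rfl fun i _ => by ring
    rw [hsum]
    exact h.2
  loopless := ⟨fun u h => h.1 rfl⟩

open Finset Real

theorem SimpleGraph.colorable_of_forall_ncard_neighborSet_lt {α : Type*} [Finite α]
    (H : SimpleGraph α) {m : ℕ} (h : ∀ a, (H.neighborSet a).ncard < m) : H.Colorable m := by
  classical
  have := Fintype.ofFinite α
  suffices ∀ s : Finset α, ∃ c : α → Fin m, ∀ a ∈ s, ∀ b ∈ s, H.Adj a b → c a ≠ c b by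
    obtain ⟨c, hc⟩ := this univ
    exact ⟨SimpleGraph.Coloring.mk c fun {a b} hab => hc a (mem_univ a) b (mem_univ b) hab⟩
  intro s
  induction s using Finset.induction_on with
  | empty => exact ⟨fun a => ⟨0, (Nat.zero_le _).trans_lt (h a)⟩, by simp⟩
  | @insert a s ha ih =>
    obtain ⟨c, hc⟩ := ih
    have hused : #((s.filter (H.Adj a)).image c) < m := calc
      _ ≤ #(s.filter (H.Adj a)) := card_image_le
      _ = ((s.filter (H.Adj a) : Finset α) : Set α).ncard := (Set.ncard_coe_finset _).symm
      _ ≤ (H.neighborSet a).ncard := Set.ncard_le_ncard (fun b hb => by simp_all)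
      _ < m := h a
    obtain ⟨x, -, hx⟩ := exists_mem_notMem_of_card_lt_card
      (s := (s.filter (H.Adj a)).image c) (t := univ)
      (by rwa [card_univ, Fintype.card_fin])
    have hupd : ∀ b ∈ s, Function.update c a x b = c b := fun b hb =>
      Function.update_of_ne (by rintro rfl; exact ha hb) _ _
    refine ⟨Function.update c a x, ?_⟩
    simp only [mem_insert]
    rintro u (rfl | hu) v (rfl | hv) huv
    · exact absurd rfl huv.ne
    · rw [Function.update_self, hupd v hv]
      exact fun hxv => hx (mem_image.2 ⟨v, mem_filter.2 ⟨hv, huv⟩, hxv.symm⟩)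
    · rw [Function.update_self, hupd u hu]
      exact fun hxu => hx (mem_image.2 ⟨u, mem_filter.2 ⟨hu, huv.symm⟩, hxu⟩)
    · rw [hupd u hu, hupd v hv]
      exact hc u hu v hv huv

section InducedMatchings

variable {V : Type*} (G : SimpleGraph V)

def CrossAdj (e f : V × V) : Prop :=
  G.Adj e.1 f.1 ∨ G.Adj e.1 f.2 ∨ G.Adj e.2 f.1 ∨ G.Adj e.2 f.2

variable {G} in
theorem CrossAdj.symm {e f : V × V} (h : CrossAdj G e f) : CrossAdj G f e := by
  unfold CrossAdj at *
  simp only [G.adj_comm f.1, G.adj_comm f.2]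
  tauto

def IsInducedMatchingPartition {t : ℕ} (M : Fin t → Finset (V × V)) : Prop :=
  (∀ i, IsInducedMatching G (M i)) ∧
  (∀ a b, G.Adj a b → ∃ i, (a, b) ∈ M i ∨ (b, a) ∈ M i) ∧
  ∀ i j a b, ((a, b) ∈ M i ∨ (b, a) ∈ M i) → ((a, b) ∈ M j ∨ (b, a) ∈ M j) → i = j

theorem exists_isInducedMatchingPartition_of_class [Fintype V] {κ : Type*}
    (cls : V × V → κ) (s : Finset κ) (hs : ∀ e, G.Adj e.1 e.2 → cls e ∈ s)
    (hcls : ∀ e f, G.Adj e.1 e.2 → G.Adj f.1 f.2 → e ≠ f → cls e = cls f → ¬ CrossAdj G e f) :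
    ∃ M : Fin #s → Finset (V × V), IsInducedMatchingPartition G M := by
  classical
  let ord := Fintype.equivFin V
  let M : Fin #s → Finset (V × V) := fun j =>
    univ.filter fun e => G.Adj e.1 e.2 ∧ ord e.1 < ord e.2 ∧ cls e = s.equivFin.symm j
  have hmem : ∀ j e, e ∈ M j ↔ G.Adj e.1 e.2 ∧ ord e.1 < ord e.2 ∧ cls e = s.equivFin.symm j :=
    fun j e => by simp [M]
  have hidx : ∀ a b (hab : G.Adj a b), ord a < ord b →
      (a, b) ∈ M (s.equivFin ⟨cls (a, b), hs (a, b) hab⟩) :=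
    fun a b hab hlt => (hmem _ _).2 ⟨hab, hlt, by simp⟩
  refine ⟨M, fun j => ⟨fun e he => ((hmem j e).1 he).1, fun e he f hf hef => ?_⟩, ?_, ?_⟩
  · rw [hmem] at he hf
    simpa only [CrossAdj, not_or] using hcls e f he.1 hf.1 hef (he.2.2.trans hf.2.2.symm)
  · intro a b hab
    rcases lt_or_gt_of_ne (ord.injective.ne hab.ne) with hlt | hlt
    · exact ⟨_, .inl (hidx a b hab hlt)⟩
    · exact ⟨_, .inr (hidx b a hab.symm hlt)⟩
  · intro i j a b hi hj
    simp only [hmem] at hi hj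
    apply s.equivFin.symm.injective
    apply Subtype.ext
    rcases hi with hi | hi <;> rcases hj with hj | hj
    · exact hi.2.2.symm.trans hj.2.2
    · exact absurd hi.2.1 hj.2.1.asymm
    · exact absurd hi.2.1 hj.2.1.asymm
    · exact hi.2.2.symm.trans hj.2.2

def blockConflictGraph {β : Type*} (z : V × V → β) : SimpleGraph (V × V) where
  Adj e f := e ≠ f ∧ G.Adj e.1 e.2 ∧ G.Adj f.1 f.2 ∧ z e = z f ∧ CrossAdj G e f
  symm := ⟨fun _ _ ⟨hne, he, hf, hz, hc⟩ => ⟨hne.symm, hf, he, hz.symm, hc.symm⟩⟩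
  loopless := ⟨fun _ h => h.1 rfl⟩

theorem exists_isInducedMatchingPartition_of_ncard_lt [Fintype V] {β : Type*}
    (z : V × V → β) (s : Finset β) (hs : ∀ e, G.Adj e.1 e.2 → z e ∈ s) {m : ℕ}
    (hdeg : ∀ e, ((blockConflictGraph G z).neighborSet e).ncard < m) :
    ∃ t ≤ #s * m, ∃ M : Fin t → Finset (V × V), IsInducedMatchingPartition G M := by
  obtain ⟨c⟩ := (blockConflictGraph G z).colorable_of_forall_ncard_neighborSet_lt hdeg
  obtain ⟨M, hM⟩ := exists_isInducedMatchingPartition_of_class G (fun e => (z e, c e))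
    (s ×ˢ univ) (fun e he => mem_product.2 ⟨hs e he, mem_univ _⟩)
    (fun e f he hf hef hcls hcross => c.valid ⟨hef, he, hf, congrArg Prod.fst hcls, hcross⟩
      (congrArg Prod.snd hcls))
  exact ⟨_, by simp, M, hM⟩

end InducedMatchings

theorem SimpleGraph.natCard_nonEdges_le_ncard {V : Type*} [Finite V] (G : SimpleGraph V) :
    Nat.card {e : Sym2 V | ¬ e.IsDiag ∧ e ∉ G.edgeSet} ≤
      {p : V × V | p.1 ≠ p.2 ∧ ¬ G.Adj p.1 p.2}.ncard := by
  rw [← Nat.card_coe_set_eq]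
  refine Nat.card_le_card_of_surjective (fun p => ⟨s(p.1.1, p.1.2), p.2⟩) ?_
  rintro ⟨e, he⟩
  induction e using Sym2.ind with
  | _ a b => exact ⟨⟨(a, b), he⟩, rfl⟩

/-- Chernoff's bound for the uniform distribution on `ι → β`, in counting form. -/
theorem ncard_ge_le_exp_mul_pow {ι β : Type*} [Fintype ι] [Fintype β]
    (Y : ι → β → ℝ) {a s M : ℝ} (hs : 0 ≤ s) (hM : ∀ i, ∑ b, exp (s * Y i b) ≤ M) :
    ({x : ι → β | a ≤ ∑ i, Y i (x i)}.ncard : ℝ) ≤ exp (-(s * a)) * M ^ Fintype.card ι := by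
  classical
  calc ({x : ι → β | a ≤ ∑ i, Y i (x i)}.ncard : ℝ)
      = ∑ x ∈ univ.filter (fun x : ι → β => a ≤ ∑ i, Y i (x i)), 1 := by
        rw [Set.ncard_eq_toFinset_card']; simp
    _ ≤ ∑ x ∈ univ.filter (fun x : ι → β => a ≤ ∑ i, Y i (x i)),
          exp (s * (∑ i, Y i (x i) - a)) :=
        sum_le_sum fun x hx => one_le_exp (mul_nonneg hs (sub_nonneg.2 (mem_filter.1 hx).2))
    _ ≤ ∑ x : ι → β, exp (s * (∑ i, Y i (x i) - a)) :=
        sum_le_sum_of_subset_of_nonneg (filter_subset _ _) fun _ _ _ => (exp_pos _).le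
    _ = exp (-(s * a)) * ∏ i, ∑ b, exp (s * Y i b) := by
        rw [Fintype.prod_sum, mul_sum]
        refine sum_congr rfl fun x _ => ?_
        rw [← exp_sum, ← exp_add, ← mul_sum]
        ring_nf
    _ ≤ exp (-(s * a)) * M ^ Fintype.card ι := by
        gcongr
        calc ∏ i, ∑ b, exp (s * Y i b) ≤ ∏ _i : ι, M :=
              prod_le_prod (fun i _ => sum_nonneg fun b _ => (exp_pos _).le) fun i _ => hM i
          _ = M ^ Fintype.card ι := by rw [prod_const, card_univ]

theorem ncard_abs_ge_le_two_mul_exp_mul_pow {ι β : Type*} [Fintype ι] [Fintype β] (Y : β → ℝ)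
    {a s M : ℝ} (hs : 0 ≤ s) (hM : ∑ b, exp (s * Y b) ≤ M) (hM' : ∑ b, exp (-s * Y b) ≤ M) :
    ({x : ι → β | a ≤ |∑ i, Y (x i)|}.ncard : ℝ) ≤ 2 * (exp (-(s * a)) * M ^ Fintype.card ι) := by
  have hsub : {x : ι → β | a ≤ |∑ i, Y (x i)|} ⊆
      {x | a ≤ ∑ i, Y (x i)} ∪ {x | a ≤ ∑ i, -Y (x i)} := fun x hx => by
    simpa only [Set.mem_union, Set.mem_ofPred_eq, sum_neg_distrib, ← le_abs] using hx
  have hupper := ncard_ge_le_exp_mul_pow (a := a) (fun (_ : ι) => Y) hs fun _ => hM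
  have hlower := ncard_ge_le_exp_mul_pow (a := a) (fun (_ : ι) b => -Y b) hs fun _ => by
    simpa only [mul_neg, neg_mul] using hM'
  calc ({x : ι → β | a ≤ |∑ i, Y (x i)|}.ncard : ℝ)
      ≤ (({x : ι → β | a ≤ ∑ i, Y (x i)}.ncard +
          {x : ι → β | a ≤ ∑ i, -Y (x i)}.ncard : ℕ) : ℝ) := by
        exact_mod_cast (Set.ncard_le_ncard hsub).trans (Set.ncard_union_le _ _)
    _ ≤ 2 * (exp (-(s * a)) * M ^ Fintype.card ι) := by push_cast; linarith

theorem sum_exp_neg_sq_le_three (S : Finset ℤ) : ∑ j ∈ S, exp (-(j : ℝ) ^ 2) ≤ 3 := by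
  have hgeom : HasSum (fun j : ℤ => (1 / 2 : ℝ) ^ j.natAbs) (2 + 1) := by
    have hneg : (fun k : ℕ => (1 / 2 : ℝ) ^ (-((k : ℤ) + 1)).natAbs) = fun k => 1 / 2 / 2 ^ k := by
      funext k
      rw [show (-((k : ℤ) + 1)).natAbs = k + 1 by omega, pow_succ, one_div, inv_pow]
      ring
    exact HasSum.of_nat_of_neg_add_one (by simpa using hasSum_geometric_two)
      (hneg ▸ hasSum_geometric_two' 1)
  calc ∑ j ∈ S, exp (-(j : ℝ) ^ 2) ≤ ∑ j ∈ S, (1 / 2 : ℝ) ^ j.natAbs := by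
        refine sum_le_sum fun j _ => ?_
        calc exp (-(j : ℝ) ^ 2) ≤ exp (-(j.natAbs : ℝ)) := by
              gcongr
              have h : ((j.natAbs : ℤ) : ℝ) ≤ ((j ^ 2 : ℤ) : ℝ) :=
                Int.cast_le.2 (Int.natAbs_le_self_sq j)
              simpa using h
          _ = exp (-1) ^ j.natAbs := by rw [← exp_nat_mul]; ring_nf
          _ ≤ (1 / 2) ^ j.natAbs := by gcongr; exact exp_neg_one_lt_half.le
    _ ≤ 2 + 1 := sum_le_hasSum S (fun _ _ => by positivity) hgeom
    _ = 3 := by norm_num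

theorem ncard_sum_sub_sq_lt_le {ι : Type*} [Fintype ι] {C : ℕ} (x : ι → Fin C) (r : ℝ) :
    ({y : ι → Fin C | ∑ i, ((x i : ℝ) - y i) ^ 2 < r}.ncard : ℝ) ≤
      exp r * 3 ^ Fintype.card ι := by
  have hsub : {y : ι → Fin C | ∑ i, ((x i : ℝ) - y i) ^ 2 < r} ⊆
      {y | -r ≤ ∑ i, -((x i : ℝ) - y i) ^ 2} := fun y hy => by
    simp only [Set.mem_ofPred_eq, sum_neg_distrib] at hy ⊢; linarith
  have hline : ∀ i, ∑ c : Fin C, exp (1 * -((x i : ℝ) - c) ^ 2) ≤ 3 := fun i => by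
    have hinj : Function.Injective fun c : Fin C => ((x i : ℤ) - c) := fun c d h =>
      Fin.ext (by simpa using h)
    calc ∑ c : Fin C, exp (1 * -((x i : ℝ) - c) ^ 2)
        = ∑ j ∈ univ.image fun c : Fin C => ((x i : ℤ) - c), exp (-(j : ℝ) ^ 2) := by
          rw [sum_image fun c _ d _ h => hinj h]; simp
      _ ≤ 3 := sum_exp_neg_sq_le_three _
  calc ({y : ι → Fin C | ∑ i, ((x i : ℝ) - y i) ^ 2 < r}.ncard : ℝ)
      ≤ ({y : ι → Fin C | -r ≤ ∑ i, -((x i : ℝ) - y i) ^ 2}.ncard : ℝ) := by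
        exact_mod_cast Set.ncard_le_ncard hsub
    _ ≤ exp (-(1 * -r)) * 3 ^ Fintype.card ι :=
        ncard_ge_le_exp_mul_pow (a := -r) (fun i (c : Fin C) => -((x i : ℝ) - c) ^ 2)
          zero_le_one hline
    _ = exp r * 3 ^ Fintype.card ι := by rw [one_mul, neg_neg]

theorem sum_exp_mul_le_card_add {ι : Type*} (s : Finset ι) (Y : ι → ℝ) {σ : ℝ}
    (hmean : ∑ i ∈ s, Y i = 0) (hY : ∀ i ∈ s, |σ * Y i| ≤ 1) :
    ∑ i ∈ s, exp (σ * Y i) ≤ #s + σ ^ 2 * ∑ i ∈ s, Y i ^ 2 := by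
  calc ∑ i ∈ s, exp (σ * Y i) ≤ ∑ i ∈ s, (1 + σ * Y i + (σ * Y i) ^ 2) :=
        sum_le_sum fun i hi => by
          linarith [(le_abs_self _).trans (abs_exp_sub_one_sub_id_le (hY i hi))]
    _ = #s + σ ^ 2 * ∑ i ∈ s, Y i ^ 2 := by
        simp only [sum_add_distrib, ← mul_sum, hmean, mul_pow, sum_const, nsmul_eq_mul]; ring

theorem sum_sub_sq_le_of_sum_eq {ι : Type*} (s : Finset ι) (D : ι → ℝ) {m R : ℝ}
    (hD : ∀ i ∈ s, 0 ≤ D i ∧ D i ≤ R) (hsum : ∑ i ∈ s, D i = #s * m) :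
    ∑ i ∈ s, (D i - m) ^ 2 ≤ #s * m * R := by
  calc ∑ i ∈ s, (D i - m) ^ 2 ≤ ∑ i ∈ s, (R * D i - 2 * m * D i + m ^ 2) :=
        sum_le_sum fun i hi => by nlinarith [hD i hi]
    _ = #s * m * R - #s * m ^ 2 := by
        simp only [sum_add_distrib, sum_sub_distrib, ← mul_sum, hsum, sum_const, nsmul_eq_mul]
        ring
    _ ≤ #s * m * R := by nlinarith [sq_nonneg m, (#s).cast_nonneg (α := ℝ)]

theorem sum_range_natCast (m : ℕ) : ∑ i ∈ range m, (i : ℝ) = m * (m - 1) / 2 := by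
  induction m with
  | zero => simp
  | succ k ih => rw [sum_range_succ, ih]; push_cast; ring

theorem sum_range_natCast_sq (m : ℕ) :
    ∑ i ∈ range m, (i : ℝ) ^ 2 = m * (m - 1) * (2 * m - 1) / 6 := by
  induction m with
  | zero => simp
  | succ k ih => rw [sum_range_succ, ih]; push_cast; ring

theorem sum_fin_sub_sq (C : ℕ) :
    ∑ p : Fin C × Fin C, ((p.1 : ℝ) - p.2) ^ 2 = C ^ 2 * ((C ^ 2 - 1) / 6) := by
  have h1 : ∑ a : Fin C, (a : ℝ) = C * (C - 1) / 2 := by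
    rw [Fin.sum_univ_eq_sum_range (fun i => (i : ℝ)), sum_range_natCast]
  have h2 : ∑ a : Fin C, (a : ℝ) ^ 2 = C * (C - 1) * (2 * C - 1) / 6 := by
    rw [Fin.sum_univ_eq_sum_range (fun i => (i : ℝ) ^ 2), sum_range_natCast_sq]
  simp only [Fintype.sum_prod_type, sub_sq, sum_add_distrib, sum_sub_distrib, ← mul_sum,
    ← sum_mul, sum_const, card_univ, Fintype.card_fin, nsmul_eq_mul, h1, h2]
  ring

theorem fin_sub_sq_le {C : ℕ} (a b : Fin C) : ((a : ℝ) - b) ^ 2 ≤ ((C : ℝ) - 1) ^ 2 := by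
  have ha : (a : ℝ) + 1 ≤ C := by exact_mod_cast a.isLt
  have hb : (b : ℝ) + 1 ≤ C := by exact_mod_cast b.isLt
  have ha0 : (0 : ℝ) ≤ a := Nat.cast_nonneg _
  have hb0 : (0 : ℝ) ≤ b := Nat.cast_nonneg _
  nlinarith

theorem sum_exp_mul_sq_sub_le {C : ℕ} (hC : 2 ≤ C) {σ : ℝ} (hσ : |σ| ≤ 3 / (C : ℝ) ^ 4) :
    ∑ p : Fin C × Fin C, exp (σ * (((p.1 : ℝ) - p.2) ^ 2 - ((C : ℝ) ^ 2 - 1) / 6)) ≤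
      (C : ℝ) ^ 2 * exp (3 / (2 * (C : ℝ) ^ 4)) := by
  set m : ℝ := ((C : ℝ) ^ 2 - 1) / 6 with hm_def
  have hC' : (2 : ℝ) ≤ C := by exact_mod_cast hC
  have hcard : (#(univ : Finset (Fin C × Fin C)) : ℝ) = (C : ℝ) ^ 2 := by simp [sq]
  have hmean : ∑ p : Fin C × Fin C, (((p.1 : ℝ) - p.2) ^ 2 - m) = 0 := by
    rw [sum_sub_distrib, sum_fin_sub_sq, sum_const, nsmul_eq_mul, hcard]; ring
  have hvar : ∑ p : Fin C × Fin C, (((p.1 : ℝ) - p.2) ^ 2 - m) ^ 2 ≤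
      (C : ℝ) ^ 2 * (C : ℝ) ^ 4 / 6 := calc
    _ ≤ _ := sum_sub_sq_le_of_sum_eq univ _ (fun p _ => ⟨sq_nonneg _, fin_sub_sq_le p.1 p.2⟩)
        (by rw [sum_fin_sub_sq, hcard])
    _ ≤ (C : ℝ) ^ 2 * (C : ℝ) ^ 4 / 6 := by
        rw [hcard, mul_assoc, mul_div_assoc]; gcongr; rw [hm_def]; nlinarith
  have hσ2 : σ ^ 2 ≤ 9 / (C : ℝ) ^ 8 := calc
    σ ^ 2 = |σ| ^ 2 := (sq_abs σ).symm
    _ ≤ (3 / (C : ℝ) ^ 4) ^ 2 := by gcongr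
    _ = 9 / (C : ℝ) ^ 8 := by ring
  have hY : ∀ p ∈ (univ : Finset (Fin C × Fin C)), |σ * (((p.1 : ℝ) - p.2) ^ 2 - m)| ≤ 1 := by
    intro p _
    have hD := fin_sub_sq_le p.1 p.2
    rw [abs_mul]
    calc |σ| * |((p.1 : ℝ) - p.2) ^ 2 - m| ≤ 3 / (C : ℝ) ^ 4 * (C - 1) ^ 2 := by
          gcongr; rw [abs_le]; constructor <;> nlinarith [sq_nonneg ((p.1 : ℝ) - p.2)]
      _ ≤ 1 := by rw [div_mul_eq_mul_div, div_le_one (by positivity)]; nlinarith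
  calc _ ≤ (C : ℝ) ^ 2 + σ ^ 2 * ∑ p : Fin C × Fin C, (((p.1 : ℝ) - p.2) ^ 2 - m) ^ 2 := by
        rw [← hcard]; exact sum_exp_mul_le_card_add univ _ hmean hY
    _ ≤ (C : ℝ) ^ 2 + 9 / (C : ℝ) ^ 8 * ((C : ℝ) ^ 2 * (C : ℝ) ^ 4 / 6) := by gcongr
    _ = (C : ℝ) ^ 2 * (1 + 3 / (2 * (C : ℝ) ^ 4)) := by field_simp; ring
    _ ≤ (C : ℝ) ^ 2 * exp (3 / (2 * (C : ℝ) ^ 4)) := by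
        gcongr; linarith [add_one_le_exp (3 / (2 * (C : ℝ) ^ 4))]

theorem two_mul_exp_mul_pow_le {C : ℝ} (hC : 0 < C) {n : ℕ} (hn : C ^ 4 ≤ n) :
    2 * (exp (-(3 / C ^ 4 * n)) * (C ^ 2 * exp (3 / (2 * C ^ 4))) ^ n) ≤
      C ^ (2 * n) * exp (-(n / (2 * C ^ 4))) := by
  have hC4 : 0 < C ^ 4 := by positivity
  have hexp : exp (-(3 / C ^ 4 * n)) * (C ^ 2 * exp (3 / (2 * C ^ 4))) ^ n =
      C ^ (2 * n) * exp (-(n / (2 * C ^ 4))) * exp (-(n / C ^ 4)) := by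
    rw [mul_pow, ← pow_mul, ← exp_nat_mul, mul_assoc (C ^ (2 * n)), ← exp_add,
      mul_left_comm, ← exp_add]
    congr 2
    field_simp
    ring
  have hhalf : 2 * exp (-(n / C ^ 4)) ≤ 1 := by
    have : 1 ≤ (n : ℝ) / C ^ 4 := (one_le_div hC4).2 hn
    linarith [exp_le_exp.2 (neg_le_neg this), exp_neg_one_lt_half]
  have hP : 0 ≤ C ^ (2 * n) * exp (-(n / (2 * C ^ 4))) := by positivity
  rw [hexp]
  nlinarith [mul_le_mul_of_nonneg_left hhalf hP]

theorem ncard_abs_sum_sub_sq_sub_ge_le {C n : ℕ} (hC : 2 ≤ C) (hn : C ^ 4 ≤ n) :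
    ({p : (Fin n → Fin C) × (Fin n → Fin C) |
        (n : ℝ) ≤ |∑ i, ((p.1 i : ℝ) - p.2 i) ^ 2 - n * ((C : ℝ) ^ 2 - 1) / 6|}.ncard : ℝ) ≤
      (C : ℝ) ^ (2 * n) * exp (-(n / (2 * (C : ℝ) ^ 4))) := by
  set Y : Fin C × Fin C → ℝ := fun q => ((q.1 : ℝ) - q.2) ^ 2 - ((C : ℝ) ^ 2 - 1) / 6 with hY
  -- `t` minimises the exponent `-t + t² C⁴ / 6` contributed by each coordinate
  set t : ℝ := 3 / (C : ℝ) ^ 4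
  have ht : 0 ≤ t := by positivity
  have hsplit : ∀ p : (Fin n → Fin C) × (Fin n → Fin C),
      ∑ i, ((p.1 i : ℝ) - p.2 i) ^ 2 - n * ((C : ℝ) ^ 2 - 1) / 6 = ∑ i, Y (p.1 i, p.2 i) := by
    intro p
    simp only [hY, sum_sub_distrib, sum_const, card_univ, Fintype.card_fin, nsmul_eq_mul]
    ring
  have hpairs : {p : (Fin n → Fin C) × (Fin n → Fin C) |
        (n : ℝ) ≤ |∑ i, ((p.1 i : ℝ) - p.2 i) ^ 2 - n * ((C : ℝ) ^ 2 - 1) / 6|}.ncard ≤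
      {x : Fin n → Fin C × Fin C | (n : ℝ) ≤ |∑ i, Y (x i)|}.ncard := by
    refine Set.ncard_le_ncard_of_injOn (fun p i => (p.1 i, p.2 i)) (fun p hp => ?_) ?_
    · simpa only [Set.mem_ofPred_eq, hsplit] using hp
    · intro p _ q _ h
      simp only [funext_iff, Prod.mk.injEq] at h
      exact Prod.ext (funext fun i => (h i).1) (funext fun i => (h i).2)
  calc _ ≤ ({x : Fin n → Fin C × Fin C | (n : ℝ) ≤ |∑ i, Y (x i)|}.ncard : ℝ) := by
        exact_mod_cast hpairs
    _ ≤ 2 * (exp (-(t * n)) * ((C : ℝ) ^ 2 * exp (3 / (2 * (C : ℝ) ^ 4))) ^ n) := by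
        simpa using ncard_abs_ge_le_two_mul_exp_mul_pow (ι := Fin n) (a := n) Y ht
          (sum_exp_mul_sq_sub_le hC (abs_of_nonneg ht).le)
          (sum_exp_mul_sq_sub_le hC (by rw [abs_neg, abs_of_nonneg ht]))
    _ ≤ (C : ℝ) ^ (2 * n) * exp (-(n / (2 * (C : ℝ) ^ 4))) :=
        two_mul_exp_mul_pow_le (by positivity) (by exact_mod_cast hn)

theorem norm_sub_sq_lt_or_of_add_eq_add {E : Type*} [NormedAddCommGroup E]
    [InnerProductSpace ℝ E] {x y x' y' : E} {μ r : ℝ} (hsum : x + y = x' + y')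
    (he : |‖x - y‖ ^ 2 - μ| < r) (hf : |‖x' - y'‖ ^ 2 - μ| < r)
    (hcross : |‖x - x'‖ ^ 2 - μ| < r ∨ |‖x - y'‖ ^ 2 - μ| < r) :
    ‖x - x'‖ ^ 2 < 2 * r ∨ ‖x - y'‖ ^ 2 < 2 * r := by
  have hpar : ‖x - y‖ ^ 2 + ‖x' - y'‖ ^ 2 = 2 * (‖x - y'‖ ^ 2 + ‖x - x'‖ ^ 2) := by
    have := parallelogram_law_with_norm ℝ (x - y') (x - x')
    rw [show x - y' + (x - x') = x - y by rw [eq_sub_of_add_eq' hsum.symm]; abel,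
      show x - y' - (x - x') = x' - y' by abel] at this
    linarith
  rw [abs_lt] at he hf
  rcases hcross with h | h <;> rw [abs_lt] at h
  · right; nlinarith [sq_nonneg ‖x - y'‖]
  · left; nlinarith [sq_nonneg ‖x - x'‖]

def latticePoint {ι : Type*} {C : ℕ} (u : ι → Fin C) : EuclideanSpace ℝ ι :=
  WithLp.toLp 2 fun i => (u i : ℝ)

theorem norm_latticePoint_sub_sq {ι : Type*} [Fintype ι] {C : ℕ} (u v : ι → Fin C) :
    ‖latticePoint u - latticePoint v‖ ^ 2 = ∑ i, ((u i : ℝ) - v i) ^ 2 := by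
  simp [EuclideanSpace.real_norm_sq_eq, latticePoint]

def coordSum {ι : Type*} {C : ℕ} (e : (ι → Fin C) × (ι → Fin C)) : ι → ℕ :=
  fun i => e.1 i + e.2 i

section AMSGraph

variable {C n : ℕ}

theorem amsGraph_sum_sub_sq_lt_of_crossAdj {e f : (Fin n → Fin C) × (Fin n → Fin C)}
    (he : (amsGraph C n).Adj e.1 e.2) (hf : (amsGraph C n).Adj f.1 f.2)
    (hz : coordSum e = coordSum f) (hc : CrossAdj (amsGraph C n) e f) :
    ∑ i, ((e.1 i : ℝ) - f.1 i) ^ 2 < 2 * n ∨ ∑ i, ((e.2 i : ℝ) - f.1 i) ^ 2 < 2 * n := by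
  have window : ∀ {u v}, (amsGraph C n).Adj u v →
      |‖latticePoint u - latticePoint v‖ ^ 2 - n * ((C : ℝ) ^ 2 - 1) / 6| < (n : ℝ) := fun h => by
    rw [norm_latticePoint_sub_sq]; exact h.2
  have hsum : latticePoint e.1 + latticePoint e.2 = latticePoint f.1 + latticePoint f.2 := by
    ext i
    simpa [latticePoint, coordSum] using congrArg (fun z : Fin n → ℕ => (z i : ℝ)) hz
  have h21 : ‖latticePoint e.2 - latticePoint f.1‖ = ‖latticePoint e.1 - latticePoint f.2‖ := by
    rw [← norm_neg, show -(latticePoint e.2 - latticePoint f.1) =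
      latticePoint e.1 - latticePoint f.2 by rw [eq_sub_of_add_eq hsum]; abel]
  have h22 : ‖latticePoint e.2 - latticePoint f.2‖ = ‖latticePoint e.1 - latticePoint f.1‖ := by
    rw [← norm_neg, show -(latticePoint e.2 - latticePoint f.2) =
      latticePoint e.1 - latticePoint f.1 by rw [eq_sub_of_add_eq hsum]; abel]
  have hcross : |‖latticePoint e.1 - latticePoint f.1‖ ^ 2 - n * ((C : ℝ) ^ 2 - 1) / 6| < (n : ℝ) ∨
      |‖latticePoint e.1 - latticePoint f.2‖ ^ 2 - n * ((C : ℝ) ^ 2 - 1) / 6| < (n : ℝ) := by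
    rcases hc with h | h | h | h
    · exact .inl (window h)
    · exact .inr (window h)
    · exact .inr (h21 ▸ window h)
    · exact .inl (h22 ▸ window h)
  simpa only [← h21, norm_latticePoint_sub_sq] using
    norm_sub_sq_lt_or_of_add_eq_add hsum (window he) (window hf) hcross

theorem amsGraph_ncard_neighborSet_blockConflictGraph_le (e : (Fin n → Fin C) × (Fin n → Fin C)) :
    ((blockConflictGraph (amsGraph C n) coordSum).neighborSet e).ncard ≤
      2 * ⌊exp (2 * n) * 3 ^ n⌋₊ := by
  have hball : ∀ x : Fin n → Fin C,
      {y : Fin n → Fin C | ∑ i, ((x i : ℝ) - y i) ^ 2 < 2 * n}.ncard ≤ ⌊exp (2 * n) * 3 ^ n⌋₊ :=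
    fun x => Nat.le_floor (by simpa using ncard_sum_sub_sq_lt_le x (2 * n))
  have hinj : Set.InjOn Prod.fst ((blockConflictGraph (amsGraph C n) coordSum).neighborSet e) := by
    rintro f ⟨-, -, -, hf, -⟩ g ⟨-, -, -, hg, -⟩ h
    refine Prod.ext h (funext fun i => Fin.ext ?_)
    have := congrFun (hf.symm.trans hg) i
    simp only [coordSum, h] at this
    omega
  calc _ ≤ ({y : Fin n → Fin C | ∑ i, ((e.1 i : ℝ) - y i) ^ 2 < 2 * n} ∪
        {y | ∑ i, ((e.2 i : ℝ) - y i) ^ 2 < 2 * n}).ncard :=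
        Set.ncard_le_ncard_of_injOn Prod.fst
          (fun _ hf => amsGraph_sum_sub_sq_lt_of_crossAdj hf.2.1 hf.2.2.1 hf.2.2.2.1 hf.2.2.2.2)
          hinj
    _ ≤ 2 * ⌊exp (2 * n) * 3 ^ n⌋₊ := by
        linarith [Set.ncard_union_le {y : Fin n → Fin C | ∑ i, ((e.1 i : ℝ) - y i) ^ 2 < 2 * n}
          {y | ∑ i, ((e.2 i : ℝ) - y i) ^ 2 < 2 * n}, hball e.1, hball e.2]

theorem amsGraph_exists_isInducedMatchingPartition (hn : 2 ≤ n) :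
    ∃ t : ℕ, (t : ℝ) ≤ (C : ℝ) ^ n * 110.25 ^ n ∧
      ∃ M : Fin t → Finset ((Fin n → Fin C) × (Fin n → Fin C)),
        IsInducedMatchingPartition (amsGraph C n) M := by
  set B : ℝ := exp (2 * n) * 3 ^ n with hB_def
  have hs : ∀ e : (Fin n → Fin C) × (Fin n → Fin C), (amsGraph C n).Adj e.1 e.2 →
      coordSum e ∈ Fintype.piFinset fun _ => range (2 * C - 1) := fun e _ => by
    simp only [Fintype.mem_piFinset, mem_range, coordSum]
    intro i
    have := (e.1 i).isLt; have := (e.2 i).isLt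
    omega
  obtain ⟨t, ht, M, hM⟩ := exists_isInducedMatchingPartition_of_ncard_lt (amsGraph C n) coordSum
    _ hs (m := 2 * ⌊B⌋₊ + 1)
    fun e => Nat.lt_succ_of_le (amsGraph_ncard_neighborSet_blockConflictGraph_le e)
  refine ⟨t, ?_, M, hM⟩
  have hB : 1 ≤ B := one_le_mul_of_one_le_of_one_le (one_le_exp (by positivity))
    (one_le_pow₀ (by norm_num))
  have he2 : exp 2 ≤ 9 := by
    rw [show (2 : ℝ) = 1 + 1 by norm_num, exp_add]; nlinarith [exp_one_lt_three, exp_pos 1]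
  have h3 : (3 : ℝ) ≤ 2 ^ n := by
    calc (3 : ℝ) ≤ 2 ^ 2 := by norm_num
      _ ≤ 2 ^ n := pow_le_pow_right₀ (by norm_num) hn
  calc (t : ℝ) ≤ ((2 * C - 1 : ℕ) : ℝ) ^ n * (2 * ⌊B⌋₊ + 1 : ℕ) := by
        simpa using (Nat.cast_le (α := ℝ)).2 ht
    _ ≤ (2 * C : ℝ) ^ n * (2 ^ n * B) := by
        gcongr
        · exact_mod_cast Nat.sub_le _ _
        · push_cast; nlinarith [Nat.floor_le (zero_le_one.trans hB)]
    _ = (C : ℝ) ^ n * (12 * exp 2) ^ n := by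
        rw [hB_def, show exp (2 * n) = exp 2 ^ n by rw [← exp_nat_mul, mul_comm],
          show (12 : ℝ) = 2 * 2 * 3 by norm_num]
        simp only [mul_pow]
        ring
    _ ≤ (C : ℝ) ^ n * 110.25 ^ n := by gcongr; linarith

theorem amsGraph_natCard_nonEdges_le (hC : 2 ≤ C) (hn : C ^ 4 ≤ n) :
    (Nat.card {e : Sym2 (Fin n → Fin C) | ¬ e.IsDiag ∧ e ∉ (amsGraph C n).edgeSet} : ℝ) ≤
      (C : ℝ) ^ (2 * n) * exp (-(n / (2 * (C : ℝ) ^ 4))) := by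
  refine le_trans (Nat.cast_le.2 ?_) (ncard_abs_sum_sub_sq_sub_ge_le hC hn)
  exact (amsGraph C n).natCard_nonEdges_le_ncard.trans
    (Set.ncard_le_ncard fun p ⟨hne, hnadj⟩ => not_lt.1 fun h => hnadj ⟨hne, h⟩)

end AMSGraph

theorem pow_rpow_add_div_log {C : ℝ} (hC : 0 < C) (hlog : log C ≠ 0) (n : ℕ) (a b : ℝ) :
    ((C ^ n) ^ (a + b / log C) : ℝ) = (C ^ n) ^ a * exp (n * b) := by
  rw [rpow_add (by positivity)]
  congr 1
  rw [rpow_def_of_pos (by positivity), log_pow]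
  congr 1
  field_simp

/-- `G_{C,n}` is a dense Ruzsa–Szemerédi graph: for every `ε > 0` and `C ≥ 2`, for all large
enough even `n ≥ 2C`, setting `K = C^n`, the edge set of `G_{C,n}` partitions into at most
`K^{1 + 2 ln(10.5)/ln C + ε}` pairwise edge-disjoint induced matchings, and the number of
unordered pairs of distinct non-adjacent vertices is at most `K^{2 - 1/(2C⁴ ln C) + ε}`. -/
theorem amsGraph_is_ruzsa_szemeredi
    (ε : ℝ) (hε : 0 < ε) (C : ℕ) (hC : 2 ≤ C) :
    ∃ n₀ : ℕ, ∀ n : ℕ, Even n → 2 * C ≤ n → n₀ ≤ n →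
      (∃ t : ℕ, ∃ M : Fin t → Finset ((Fin n → Fin C) × (Fin n → Fin C)),
        (t : ℝ) ≤ ((C : ℝ) ^ n) ^ ((1 : ℝ) + 2 * Real.log 10.5 / Real.log C + ε) ∧
        (∀ i, IsInducedMatching (amsGraph C n) (M i)) ∧
        (∀ a b, (amsGraph C n).Adj a b → ∃ i, (a, b) ∈ M i ∨ (b, a) ∈ M i) ∧
        (∀ i j : Fin t, ∀ a b,
          ((a, b) ∈ M i ∨ (b, a) ∈ M i) → ((a, b) ∈ M j ∨ (b, a) ∈ M j) → i = j)) ∧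
      ((Nat.card {e : Sym2 (Fin n → Fin C) |
          ¬ e.IsDiag ∧ e ∉ (amsGraph C n).edgeSet} : ℝ)
        ≤ ((C : ℝ) ^ n) ^ ((2 : ℝ) - 1 / (2 * (C : ℝ) ^ 4 * Real.log C) + ε)) := by
  have hC1 : (1 : ℝ) < C := by exact_mod_cast hC
  have hlog : log C ≠ 0 := (log_pos hC1).ne'
  refine ⟨C ^ 4, fun n _ _ hn => ⟨?_, ?_⟩⟩
  all_goals have hK : (1 : ℝ) ≤ (C : ℝ) ^ n := one_le_pow₀ hC1.le
  · obtain ⟨t, ht, M, hM⟩ := amsGraph_exists_isInducedMatchingPartition (C := C)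
      (hC.trans (Nat.le_self_pow (by norm_num) C) |>.trans hn)
    refine ⟨t, M, ht.trans ?_, hM⟩
    calc (C : ℝ) ^ n * 110.25 ^ n = ((C : ℝ) ^ n) ^ (1 + 2 * log 10.5 / log C) := by
          rw [pow_rpow_add_div_log (by positivity) hlog, rpow_one, exp_nat_mul,
            ← log_rpow (by norm_num), exp_log (by norm_num)]
          norm_num
      _ ≤ _ := rpow_le_rpow_of_exponent_le hK (le_add_of_nonneg_right hε.le)
  · calc _ ≤ (C : ℝ) ^ (2 * n) * exp (-(n / (2 * (C : ℝ) ^ 4))) :=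
          amsGraph_natCard_nonEdges_le hC hn
      _ = ((C : ℝ) ^ n) ^ (2 - 1 / (2 * (C : ℝ) ^ 4 * log C)) := by
          rw [show 2 - 1 / (2 * (C : ℝ) ^ 4 * log C) = 2 + -(1 / (2 * (C : ℝ) ^ 4)) / log C by
              ring, pow_rpow_add_div_log (by positivity) hlog, rpow_two, ← pow_mul, mul_comm n]
          ring_nf
      _ ≤ _ := rpow_le_rpow_of_exponent_le hK (le_add_of_nonneg_right hε.le)
end
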